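/- arXiv:1408.3038 — 2 statements merged into one kernel-verified Lean document; each statement's English description precedes it below -/
import Mathlib

section
/- Let S be a folding string which satisfies properties 1) and 2). Then every complete S-folding curve is self-avoiding and covers arbitrarily large squares (for every m ∈ ℕ* there is a lattice square of side m such that every unit segment inside that square is the support of a segment of the curve). -/
/- Common framework for paperfolding curves, coverings of the plane by such
curves, and the local isomorphism property, following F. Oger,
"The number of paperfolding curves in a covering of the plane". -/

namespace Paperfolding

/-- Lattice points: we identify ℝ² with ℂ and ℤ² with the Gaussian integers ℤ+iℤ. -/
abbrev Pt := ℤ × ℤ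

/-- Multiplication by `i` (rotation by π/2) on ℤ². -/
def rot (v : Pt) : Pt := (-v.2, v.1)

/-- Multiplication by `-i` (rotation by -π/2) on ℤ². -/
def rotInv (v : Pt) : Pt := (v.2, -v.1)

/-- `i^a` for `a = ±1`. -/
def rotBy (a : ℤ) (v : Pt) : Pt := if a = 1 then rot v else rotInv v

/-- Complex (Gaussian integer) multiplication on ℤ². -/
def cmul (u v : Pt) : Pt := (u.1 * v.1 - u.2 * v.2, u.1 * v.2 + u.2 * v.1)

/-- The four unit direction vectors `1, -1, i, -i`. -/
def IsUnitVec (v : Pt) : Prop := v = (1, 0) ∨ v = (-1, 0) ∨ v = (0, 1) ∨ v = (0, -1)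

/-- A curve: a (finite, one-sided infinite or bi-infinite) sequence of oriented unit
segments, the `k`-th segment going from `vertex k` to `vertex (k+1)` (for `k, k+1` in
the index interval `dom`), with a turn of ±π/2 at each interior vertex. -/
structure Curve where
  dom : Set ℤ
  isInterval : ∀ ⦃a b c : ℤ⦄, a ∈ dom → c ∈ dom → a ≤ b → b ≤ c → b ∈ dom
  nontrivial : ∃ k, k ∈ dom ∧ k + 1 ∈ dom
  vertex : ℤ → Pt
  step : ∀ k, k ∈ dom → k + 1 ∈ dom → IsUnitVec (vertex (k + 1) - vertex k)
  turn : ∀ k, k ∈ dom → k + 2 ∈ dom →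
    vertex (k + 2) - vertex (k + 1) = rot (vertex (k + 1) - vertex k) ∨
    vertex (k + 2) - vertex (k + 1) = rotInv (vertex (k + 1) - vertex k)

/-- A complete curve is indexed by all of ℤ. -/
def Curve.IsComplete (C : Curve) : Prop := C.dom = Set.univ

/-- `C` has a segment with index `k` (from `vertex k` to `vertex (k+1)`). -/
def Curve.HasSeg (C : Curve) (k : ℤ) : Prop := k ∈ C.dom ∧ k + 1 ∈ C.dom

/-- The curve `C` is associated to the sequence `b` (i.e. `ε_{k+1} = i^{b k} · ε_k`
for consecutive segments `k`, `k+1`). -/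
def Curve.AssocSeq (C : Curve) (b : ℤ → ℤ) : Prop :=
  ∀ k : ℤ, k ∈ C.dom → k + 2 ∈ C.dom →
    C.vertex (k + 2) - C.vertex (k + 1) = rotBy (b k) (C.vertex (k + 1) - C.vertex k)

/-- Segment `k` of `C` has the nonoriented unit segment `[z, z+e]` as support. -/
def SegSupports (C : Curve) (k : ℤ) (z e : Pt) : Prop :=
  (C.vertex k = z ∧ C.vertex (k + 1) = z + e) ∨ (C.vertex k = z + e ∧ C.vertex (k + 1) = z)

/-- A covering: a set of complete curves such that every nonoriented unit segment
of the lattice is the support of exactly one segment of one curve. -/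
def IsCovering (𝒞 : Set Curve) : Prop :=
  (∀ C ∈ 𝒞, C.IsComplete) ∧
  ∀ z e : Pt, (e = (1, 0) ∨ e = (0, 1)) →
    ∃! p : Curve × ℤ, p.1 ∈ 𝒞 ∧ SegSupports p.1 p.2 z e

/-- Segments `k` of `C` and `l` of `D` have the same (nonoriented) support. -/
def SameSeg (C : Curve) (k : ℤ) (D : Curve) (l : ℤ) : Prop :=
  (C.vertex k = D.vertex l ∧ C.vertex (k + 1) = D.vertex (l + 1)) ∨
  (C.vertex k = D.vertex (l + 1) ∧ C.vertex (k + 1) = D.vertex l)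

/-- A self-avoiding curve: distinct segments have distinct supports.  (Since the
curves considered here turn by ±π/2 at every vertex and are rounded at vertices,
two passes of such a curve through a vertex never cross, so this is equivalent to
the geometric notion.) -/
def Curve.SelfAvoiding (C : Curve) : Prop :=
  ∀ k l : ℤ, C.HasSeg k → C.HasSeg l → SameSeg C k C l → k = l

/-- Disjointness of two (rounded) curves: no common segment support. -/
def DisjointCurves (C D : Curve) : Prop :=
  ∀ k l : ℤ, C.HasSeg k → D.HasSeg l → ¬ SameSeg C k D l

/-- The nonoriented segment `[a, b]` is a segment of the curve `C`. -/
def SegOfCurve (C : Curve) (a b : Pt) : Prop :=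
  ∃ k : ℤ, C.HasSeg k ∧
    ((C.vertex k = a ∧ C.vertex (k + 1) = b) ∨ (C.vertex k = b ∧ C.vertex (k + 1) = a))

/-- The nonoriented segment `[a, b]` is a segment of a curve of `𝒟`. -/
def SegInSet (𝒟 : Set Curve) (a b : Pt) : Prop := ∃ C ∈ 𝒟, SegOfCurve C a b

/-! ### Translations, subcurves, patterns and local isomorphism -/

/-- Translation of a curve by a lattice vector. -/
def Curve.translate (t : Pt) (C : Curve) : Curve where
  dom := C.dom
  isInterval := C.isInterval
  nontrivial := C.nontrivial
  vertex := fun k => C.vertex k + t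
  step := fun k h1 h2 => by simpa using C.step k h1 h2
  turn := fun k h1 h2 => by simpa using C.turn k h1 h2

/-- Translation of a set of curves. -/
def translateSet (t : Pt) (𝓕 : Set Curve) : Set Curve := Curve.translate t '' 𝓕

/-- `f` embeds in `C` with index shift `j` (as a subcurve, preserving orientation
and connections). -/
def Embeds (f C : Curve) (j : ℤ) : Prop :=
  ∀ k ∈ f.dom, (k + j ∈ C.dom ∧ f.vertex k = C.vertex (k + j))

/-- `f` is a subcurve of `C`. -/
def IsSubcurveOf (f C : Curve) : Prop := ∃ j : ℤ, Embeds f C j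

/-- A bounded set of curves. -/
def BoundedSet (𝓑 : Set Curve) : Prop :=
  ∃ N : ℕ, ∀ C ∈ 𝓑, ∀ k ∈ C.dom, |(C.vertex k).1| ≤ N ∧ |(C.vertex k).2| ≤ N

/-- A pattern of `𝒞`: a bounded set of subcurves of curves of `𝒞`. -/
def IsPatternOf (P : Set Curve) (𝒞 : Set Curve) : Prop :=
  BoundedSet P ∧ ∀ f ∈ P, ∃ C ∈ 𝒞, IsSubcurveOf f C

/-- All vertices of `C` lie in the square with corner `z` and side `r`. -/
def InSquare (C : Curve) (z : Pt) (r : ℕ) : Prop :=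
  ∀ k ∈ C.dom, z.1 ≤ (C.vertex k).1 ∧ (C.vertex k).1 ≤ z.1 + r ∧
    z.2 ≤ (C.vertex k).2 ∧ (C.vertex k).2 ≤ z.2 + r

/-- The local isomorphism property: every pattern of `𝒞` occurs (up to translation)
in every square of a sufficiently large size. -/
def HasLIP (𝒞 : Set Curve) : Prop :=
  ∀ P : Set Curve, IsPatternOf P 𝒞 → ∃ r : ℕ, 0 < r ∧ ∀ z : Pt, ∃ t : Pt,
    IsPatternOf (translateSet t P) 𝒞 ∧ ∀ f ∈ translateSet t P, InSquare f z r

/-- Two coverings are locally isomorphic if each bounded pattern of either one is,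
up to translation, a pattern of the other. -/
def LocallyIsomorphic (𝒞 𝒟 : Set Curve) : Prop :=
  (∀ P : Set Curve, IsPatternOf P 𝒞 → ∃ t : Pt, IsPatternOf (translateSet t P) 𝒟) ∧
  (∀ P : Set Curve, IsPatternOf P 𝒟 → ∃ t : Pt, IsPatternOf (translateSet t P) 𝒞)

/-! ### The relations `<` and `≪` between sets of curves -/

/-- Segment `k` of `C` belongs to the placed curve `f` (via some embedding of `f`
into `C`). -/
def SegBelongs (f C : Curve) (k : ℤ) : Prop :=
  ∃ j : ℤ, Embeds f C j ∧ f.HasSeg (k - j)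

/-- Segments `k` and `k+1` of `C` are consecutive segments of the placed curve `f`. -/
def SegPairBelongs (f C : Curve) (k : ℤ) : Prop :=
  ∃ j : ℤ, Embeds f C j ∧ f.HasSeg (k - j) ∧ f.HasSeg (k - j + 1)

/-- `𝓕 < 𝒟`: each curve of `𝓕` is contained in a curve of `𝒟`, and any consecutive
segments of a curve of `𝒟` which belong to curves of `𝓕` are consecutive in one of
them. -/
def CurvesLt (𝓕 𝒟 : Set Curve) : Prop :=
  𝓕 ≠ 𝒟 ∧
  (∀ f ∈ 𝓕, ∃ C ∈ 𝒟, IsSubcurveOf f C) ∧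
  (∀ C ∈ 𝒟, ∀ k : ℤ, (∃ f ∈ 𝓕, SegBelongs f C k) → (∃ g ∈ 𝓕, SegBelongs g C (k + 1)) →
    ∃ h ∈ 𝓕, SegPairBelongs h C k)

/-- The three segments completing `[a,b]` to the unit square on the side `p`
(`p` a unit vector perpendicular to `b - a`) all belong to curves of `𝒟`. -/
def FlankSegs (𝒟 : Set Curve) (a b p : Pt) : Prop :=
  SegInSet 𝒟 a (a + p) ∧ SegInSet 𝒟 (a + p) (b + p) ∧ SegInSet 𝒟 b (b + p)

/-- `𝓕 ≪ 𝒟`: `𝓕 < 𝒟` and, for each segment `A` of a curve of `𝓕`, the `6` segments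
which form two squares with `A` belong to curves of `𝒟`. -/
def CurvesLL (𝓕 𝒟 : Set Curve) : Prop :=
  CurvesLt 𝓕 𝒟 ∧
  ∀ f ∈ 𝓕, ∀ k : ℤ, f.HasSeg k →
    FlankSegs 𝒟 (f.vertex k) (f.vertex (k + 1)) (rot (f.vertex (k + 1) - f.vertex k)) ∧
    FlankSegs 𝒟 (f.vertex k) (f.vertex (k + 1)) (rotInv (f.vertex (k + 1) - f.vertex k))

/-! ### ∞-folding sequences and generated coverings -/

/-- `σ(S)`: reverse the finite sequence and change all signs. -/
def sigmaSeq (S : List ℤ) : List ℤ := (S.map fun a => -a).reverse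

/-- The `n`-folding sequences, obtained by folding a strip of paper `n` times. -/
inductive IsNFolding : ℕ → List ℤ → Prop
  | one (a : ℤ) : (a = 1 ∨ a = -1) → IsNFolding 1 [a]
  | succ {n : ℕ} {S : List ℤ} (a : ℤ) : (a = 1 ∨ a = -1) → IsNFolding n S →
      IsNFolding (n + 1) (S ++ a :: sigmaSeq S)

/-- The finite subword `(b k, b (k+1), …, b (k+l-1))` of a bi-infinite sequence. -/
def wordAt (b : ℤ → ℤ) (k : ℤ) (l : ℕ) : List ℤ := List.ofFn fun i : Fin l => b (k + (i : ℕ))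

/-- A complete folding sequence: a bi-infinite sequence all of whose finite
subwords occur in some `n`-folding sequence. -/
def IsCompleteFoldingSeq (b : ℤ → ℤ) : Prop :=
  ∀ k : ℤ, ∀ l : ℕ, ∃ n : ℕ, ∃ S : List ℤ, IsNFolding n S ∧ (wordAt b k l) <:+: S

/-- A complete folding curve: a complete curve associated to a complete folding
sequence. -/
def IsCompleteFoldingCurve (C : Curve) : Prop :=
  C.IsComplete ∧ ∃ b : ℤ → ℤ, C.AssocSeq b ∧ IsCompleteFoldingSeq b

/-- A covering of the plane by complete folding curves. -/
def IsFoldingCovering (𝒞 : Set Curve) : Prop :=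
  IsCovering 𝒞 ∧ ∀ C ∈ 𝒞, IsCompleteFoldingCurve C

/-- An ∞-folding sequence `(a_k)_{k ≥ 1}` (the value at `0` is irrelevant):
`(a_1, …, a_{2^n - 1})` is an `n`-folding sequence for each `n ≥ 1`. -/
def IsInfFolding (a : ℕ → ℤ) : Prop :=
  ∀ n : ℕ, 0 < n → IsNFolding n (List.ofFn fun i : Fin (2 ^ n - 1) => a ((i : ℕ) + 1))

/-- The bi-infinite sequence `(σ(a), ε, a)`: equals `a_k` for `k ≥ 1`, `ε` at `0`,
and `-a_{-k}` for `k ≤ -1`. -/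
def twoSided (a : ℕ → ℤ) (ε : ℤ) : ℤ → ℤ := fun k =>
  if 0 < k then a k.toNat else if k = 0 then ε else -(a (-k).toNat)

/-- A covering generated by a curve associated to the ∞-folding sequence `a`:
a covering which satisfies the local isomorphism property and contains a complete
curve associated to `(σ(a), ε, a)` for some `ε = ±1`. -/
def GeneratedBy (𝒞 : Set Curve) (a : ℕ → ℤ) : Prop :=
  IsCovering 𝒞 ∧ HasLIP 𝒞 ∧ ∃ ε : ℤ, (ε = 1 ∨ ε = -1) ∧ ∃ C ∈ 𝒞, C.AssocSeq (twoSided a ε)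

/-- The derived sequence of an ∞-folding sequence is `(a_{2k})_{k≥1}`; iterating
`k` times gives `(a_{2^k · j})_{j≥1}`. -/
def derivedIter (a : ℕ → ℤ) (k : ℕ) : ℕ → ℤ := fun j => a (2 ^ k * j)

/-- An alternating folding sequence. -/
def IsAlternating (a : ℕ → ℤ) : Prop :=
  IsInfFolding a ∧ ∀ n : ℕ, a (2 ^ (n + 1)) = -(a (2 ^ n))

/-! ### The sets `E_n(𝒞)` and the property `P` -/

/-- A walk of length `L` starting at `z` along a curve of `𝒞` (in either direction):
the nonoriented subcurves with endpoint `z` and length `L`. -/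
def WalkFrom (𝒞 : Set Curve) (z : Pt) (L : ℕ) (w : ℕ → Pt) : Prop :=
  w 0 = z ∧ ∃ C ∈ 𝒞,
    (∃ j : ℤ, ∀ i : ℕ, i ≤ L → (j + (i : ℕ) ∈ C.dom ∧ w i = C.vertex (j + (i : ℕ)))) ∨
    (∃ j : ℤ, ∀ i : ℕ, i ≤ L → (j - (i : ℕ) ∈ C.dom ∧ w i = C.vertex (j - (i : ℕ))))

/-- `E_n(𝒞)`: the set of points `z` such that the four nonoriented subcurves of
curves of `𝒞` with endpoint `z` and length `2^n` are obtained from one of them by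
the rotations of center `z` (equivalently: the set of walks from `z` of length
`2^n` is stable under the rotation of center `z` and angle π/2). -/
def Eset (𝒞 : Set Curve) (n : ℕ) : Set Pt :=
  {z | ∀ w : ℕ → Pt, WalkFrom 𝒞 z (2 ^ n) w →
    WalkFrom 𝒞 z (2 ^ n) (fun i => z + rot (w i - z))}

/-- A diagonal direction. -/
def IsDiag (d : Pt) : Prop := d = (1, 1) ∨ d = (1, -1) ∨ d = (-1, 1) ∨ d = (-1, -1)

/-- A curve of `𝒞` passes through `X` connecting the segments `[X, X+e]` and
`[X, X+f]` (rounding the corner at `X`). -/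
def PassAt (𝒞 : Set Curve) (X e f : Pt) : Prop :=
  ∃ C ∈ 𝒞, ∃ k : ℤ, C.HasSeg k ∧ C.HasSeg (k + 1) ∧ C.vertex (k + 1) = X ∧
    ((C.vertex k = X + e ∧ C.vertex (k + 2) = X + f) ∨
     (C.vertex k = X + f ∧ C.vertex (k + 2) = X + e))

/-- The two unit squares lying in the quadrants `d` and `-d` at their common vertex
`X` are connected at `X`: no curve of `𝒞` rounds the corner at `X` inside either of
these two quadrants, so that the two centers and `X` lie in the same connected
component of the complement of `𝒞`. -/
def SquaresConnected (𝒞 : Set Curve) (X d : Pt) : Prop :=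
  ¬ PassAt 𝒞 X ((d.1 : ℤ), (0 : ℤ)) ((0 : ℤ), (d.2 : ℤ)) ∧
  ¬ PassAt 𝒞 X ((-d.1 : ℤ), (0 : ℤ)) ((0 : ℤ), (-d.2 : ℤ))

/-- Exactly two of three propositions hold. -/
def ExactlyTwo (A B C : Prop) : Prop := (A ∧ B ∧ ¬C) ∨ (A ∧ ¬B ∧ C) ∨ (¬A ∧ B ∧ C)

/-- The property `P(X)`: `X ∈ E_2(𝒞)` and each unit square with vertex `X` is
connected to `2` unit squares without vertex `X` (the candidates being the three
unit squares meeting it at its three corners other than `X`). -/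
def Pprop (𝒞 : Set Curve) (X : Pt) : Prop :=
  X ∈ Eset 𝒞 2 ∧ ∀ d : Pt, IsDiag d →
    ExactlyTwo (SquaresConnected 𝒞 (X + d) d)
      (SquaresConnected 𝒞 (X + ((d.1 : ℤ), (0 : ℤ))) ((d.1 : ℤ), (-d.2 : ℤ)))
      (SquaresConnected 𝒞 (X + ((0 : ℤ), (d.2 : ℤ))) ((d.1 : ℤ), (-d.2 : ℤ)))

/-! ### Density -/

/-- All vertices of `C` lie in the real square `Σ_s(z)`. -/
def InRealSquare (C : Curve) (z : ℝ × ℝ) (s : ℝ) : Prop :=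
  ∀ k ∈ C.dom, z.1 ≤ ((C.vertex k).1 : ℝ) ∧ ((C.vertex k).1 : ℝ) ≤ z.1 + s ∧
    z.2 ≤ ((C.vertex k).2 : ℝ) ∧ ((C.vertex k).2 : ℝ) ≤ z.2 + s

/-- The translates `ℱ` of `ℬ` with `ℱ < 𝒞` and `ℱ ⊆ Σ_s(z)`, indexed by the
translation vector. -/
def occSet (𝒞 ℬ : Set Curve) (z : ℝ × ℝ) (s : ℝ) : Set Pt :=
  {t : Pt | CurvesLt (translateSet t ℬ) 𝒞 ∧ ∀ f ∈ translateSet t ℬ, InRealSquare f z s}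

/-- `ℬ` has density `d` in `𝒞`. -/
def HasDensity (𝒞 ℬ : Set Curve) (d : ℝ) : Prop :=
  ∀ ε : ℝ, 0 < ε → ∃ r : ℝ, 0 < r ∧ ∀ s : ℝ, r ≤ s → ∀ z : ℝ × ℝ,
    s ^ 2 * d * (1 - ε) < ((occSet 𝒞 ℬ z s).ncard : ℝ) ∧
    ((occSet 𝒞 ℬ z s).ncard : ℝ) < s ^ 2 * d * (1 + ε)

/-- No vertex of a curve of `𝒜` lies in `E`. -/
def NoVertexIn (𝒜 : Set Curve) (E : Set Pt) : Prop :=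
  ∀ C ∈ 𝒜, ∀ k ∈ C.dom, C.vertex k ∉ E

/-! ### Derivations -/

/-- Every `z ∈ ℤ+iℤ` is the initial point of two opposite segments. -/
def OppositeSegsEverywhere (𝒞 : Set Curve) : Prop :=
  ∀ z : Pt, ∃ C ∈ 𝒞, ∃ k : ℤ, ∃ D ∈ 𝒞, ∃ l : ℤ, C.HasSeg k ∧ D.HasSeg l ∧
    C.vertex k = z ∧ D.vertex l = z ∧ C.vertex (k + 1) - z = -(D.vertex (l + 1) - z)

/-- The set of `m` consecutive placed segments of `C` starting at index `j`. -/
def run (C : Curve) (j : ℤ) (m : ℕ) : Set (Curve × ℤ) :=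
  {p | p.1 = C ∧ ∃ i : ℕ, i < m ∧ p.2 = j + (i : ℕ)}

/-- `Δ` is a derivation from `𝒞` to `𝒟` with associated finite sequence `L`
(of length `m - 1`): the preimage of each segment `A` of a curve of `𝒟` is a
subcurve of a curve of `𝒞` with `m` segments, associated to `L` or `-L` according
to the parity of `α(A)`; preimages of consecutive segments are consecutive; and a
fixed direct similitude `w ↦ u·w + v` maps `α(A)`, `β(A)` to the initial and
terminal points of the preimage of `A`. -/
def IsDerivationWith (𝒞 𝒟 : Set Curve) (Δ : Curve × ℤ → Curve × ℤ) (L : List ℤ) : Prop :=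
  ∃ u v : Pt, u ≠ (0, 0) ∧
  (∀ p : Curve × ℤ, p.1 ∈ 𝒞 → (Δ p).1 ∈ 𝒟) ∧
  ∀ D ∈ 𝒟, ∀ l : ℤ, ∃ C ∈ 𝒞, ∃ j : ℤ,
    {p : Curve × ℤ | p.1 ∈ 𝒞 ∧ Δ p = (D, l)} = run C j (L.length + 1) ∧
    {p : Curve × ℤ | p.1 ∈ 𝒞 ∧ Δ p = (D, l + 1)} = run C (j + (L.length + 1)) (L.length + 1) ∧
    (∀ i : ℕ, i < L.length →
      C.vertex (j + (i : ℕ) + 2) - C.vertex (j + (i : ℕ) + 1) =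
        rotBy (if Even ((D.vertex l).1 + (D.vertex l).2) then L.getD i 0 else -(L.getD i 0))
          (C.vertex (j + (i : ℕ) + 1) - C.vertex (j + (i : ℕ)))) ∧
    C.vertex j = cmul u (D.vertex l) + v ∧
    C.vertex (j + ((L.length : ℤ) + 1)) = cmul u (D.vertex (l + 1)) + v

/-- `Δ` is a derivation from `𝒞` to `𝒟`. -/
def IsDerivation (𝒞 𝒟 : Set Curve) (Δ : Curve × ℤ → Curve × ℤ) : Prop :=
  ∃ L : List ℤ, L ≠ [] ∧ (∀ a ∈ L, a = 1 ∨ a = -1) ∧ IsDerivationWith 𝒞 𝒟 Δ L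

/-! ### Folding strings (Dekking) -/

/-- A folding string: a finite ±1-sequence. -/
def IsFoldingString (S : List ℤ) : Prop := ∀ a ∈ S, a = 1 ∨ a = -1

/-- Entry `i` (1-based) of the folding convolution `S ∗ T`, where `m = |S| + 1`:
`(S∗T)_{km} = t_k`, and `(S∗T)_{km+j} = s_j` if `k` is even, `-s_{m-j}` if `k`
is odd. -/
def convEntry (S T : List ℤ) (i : ℕ) : ℤ :=
  let m := S.length + 1
  if i % m = 0 then T.getD (i / m - 1) 0
  else if (i / m) % 2 = 0 then S.getD (i % m - 1) 0
  else -(S.getD (m - i % m - 1) 0)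

/-- The folding convolution `S ∗ T` of two folding strings. -/
def foldConv (S T : List ℤ) : List ℤ :=
  List.ofFn fun idx : Fin ((S.length + 1) * (T.length + 1) - 1) => convEntry S T ((idx : ℕ) + 1)

/-- `foldIter S n = S^{∗(n+1)}`. -/
def foldIter (S : List ℤ) : ℕ → List ℤ
  | 0 => S
  | n + 1 => foldConv (foldIter S n) S

/-- `S^{∗∞}` as a function on 1-based indices (each `S^{∗n}` is an initial segment
of `S^{∗(n+1)}`, so the value of entry `i` has stabilized in `S^{∗(i+1)}`). -/
def foldInf (S : List ℤ) (i : ℕ) : ℤ := (foldIter S i).getD (i - 1) 0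

/-- A complete `S`-folding sequence: a bi-infinite sequence each of whose finite
subwords occurs in `S^{∗∞}`. -/
def IsCompleteSFoldingSeq (S : List ℤ) (b : ℤ → ℤ) : Prop :=
  ∀ k : ℤ, ∀ l : ℕ, ∃ j : ℕ, 0 < j ∧ ∀ i : ℕ, i < l → b (k + (i : ℕ)) = foldInf S (j + i)

/-- A complete `S`-folding curve. -/
def IsCompleteSFoldingCurve (S : List ℤ) (C : Curve) : Prop :=
  C.IsComplete ∧ ∃ b : ℤ → ℤ, C.AssocSeq b ∧ IsCompleteSFoldingSeq S b

/-- A (one-sided infinite) curve associated to `S^{∗∞}`, with segments indexed by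
`k ≥ 1`. -/
def IsInfSCurve (S : List ℤ) (C : Curve) : Prop :=
  C.dom = Set.Ici (1 : ℤ) ∧ C.AssocSeq (fun k => foldInf S k.toNat)

/-- `C` covers the lattice square with corner `z` and side `m`: each unit segment
inside that square is the support of a segment of `C`. -/
def CoversSquare (C : Curve) (z : Pt) (m : ℕ) : Prop :=
  ∀ a e : Pt, (e = (1, 0) ∨ e = (0, 1)) →
    z.1 ≤ a.1 → a.1 + e.1 ≤ z.1 + m → z.2 ≤ a.2 → a.2 + e.2 ≤ z.2 + m →
    SegOfCurve C a (a + e)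

/-- `C` covers arbitrarily large squares. -/
def CoversArbLargeSquares (C : Curve) : Prop :=
  ∀ m : ℕ, 0 < m → ∃ z : Pt, CoversSquare C z m

/-- `D` is the image of `C` under `n` quarter turns (rotation of angle `nπ/2`)
about the origin. -/
def RotCopy (n : ℕ) (C D : Curve) : Prop :=
  D.dom = C.dom ∧ ∀ k : ℤ, D.vertex k = rot^[n] (C.vertex k)

/-- The curves of `𝒞` (together) cover the plane: every nonoriented unit segment is
the support of a segment of a curve of `𝒞`. -/
def CoversPlane (𝒞 : Set Curve) : Prop :=
  ∀ z e : Pt, (e = (1, 0) ∨ e = (0, 1)) → SegInSet 𝒞 z (z + e)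

/-- Property 1): every curve associated to `S^{∗∞}` is self-avoiding. -/
def Prop1 (S : List ℤ) : Prop := ∀ C : Curve, IsInfSCurve S C → C.SelfAvoiding

/-- Property 2): every curve associated to `S^{∗∞}` covers arbitrarily large
squares. -/
def Prop2 (S : List ℤ) : Prop := ∀ C : Curve, IsInfSCurve S C → CoversArbLargeSquares C

/-- Property 3) (`S` is perfect): for every curve `C` associated to `S^{∗∞}`
starting at the origin, the four curves obtained from `C` by the rotations of
angles `0, π/2, π, 3π/2` about the origin cover the plane. -/
def Prop3 (S : List ℤ) : Prop :=
  ∀ C D1 D2 D3 : Curve, IsInfSCurve S C → C.vertex 1 = (0, 0) →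
    RotCopy 1 C D1 → RotCopy 2 C D2 → RotCopy 3 C D3 →
    CoversPlane {C, D1, D2, D3}

/-- The complete curve `D` is obtained by connecting the one-sided curves `R`
(traversed forwards, on indices `≥ 1`) and `R'` (traversed backwards) at their
common initial point. -/
def ConnectsPair (D R R' : Curve) : Prop :=
  D.IsComplete ∧ (∀ k : ℤ, 1 ≤ k → D.vertex k = R.vertex k) ∧
  (∀ k : ℤ, 1 ≤ k → D.vertex (2 - k) = R'.vertex k)

/-- The pair of complete curves `(A1, A2)` is obtained by connecting the four
rotated copies `C, D1, D2, D3` of a curve. -/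
def ConnectionOf (C D1 D2 D3 A1 A2 : Curve) : Prop :=
  ∃ i j k l : Fin 4, ({i, j, k, l} : Set (Fin 4)) = Set.univ ∧
    ConnectsPair A1 (![C, D1, D2, D3] i) (![C, D1, D2, D3] j) ∧
    ConnectsPair A2 (![C, D1, D2, D3] k) (![C, D1, D2, D3] l)

/-! ### Equivalence of curves and of sets of curves (up to reindexing/reversal) -/

/-- `C` and `D` are the same curve up to an index shift. -/
def ShiftEq (C D : Curve) : Prop :=
  ∃ j : ℤ, (∀ k : ℤ, k ∈ C.dom ↔ k + j ∈ D.dom) ∧ ∀ k ∈ C.dom, C.vertex k = D.vertex (k + j)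

/-- `C` is the reversal of `D`, up to an index shift. -/
def ReverseShiftEq (C D : Curve) : Prop :=
  ∃ j : ℤ, (∀ k : ℤ, k ∈ C.dom ↔ j - k ∈ D.dom) ∧ ∀ k ∈ C.dom, C.vertex k = D.vertex (j - k)

/-- Two curves are equivalent if they have the same geometric support with the
same connections. -/
def CurveEquiv (C D : Curve) : Prop := ShiftEq C D ∨ ReverseShiftEq C D

/-- Two sets of curves are equivalent if they consist of (pairwise) equivalent
curves. -/
def SetEquivCurves (𝒞 𝒟 : Set Curve) : Prop :=
  (∀ C ∈ 𝒞, ∃ D ∈ 𝒟, CurveEquiv C D) ∧ (∀ D ∈ 𝒟, ∃ C ∈ 𝒞, CurveEquiv C D)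

/-- Two curves have a common vertex. -/
def HaveCommonVertex (C D : Curve) : Prop :=
  ∃ k ∈ C.dom, ∃ l ∈ D.dom, C.vertex k = D.vertex l

/-! ### Inverse images of sets of curves under a derivation -/

/-- The placed segments of `f`, embedded in `C` with shift `j`. -/
def SegsOfAt (f C : Curve) (j : ℤ) : Set (Curve × ℤ) :=
  {p | p.1 = C ∧ ∃ k : ℤ, f.HasSeg k ∧ p.2 = k + j}

/-- `g = Δ⁻¹(f)`: the segments of `g` (placed in `𝒞`) are exactly the `Δ`-preimages
of the segments of `f` (placed in `𝒞`). -/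
def IsInvImageCurve (𝒞 : Set Curve) (Δ : Curve × ℤ → Curve × ℤ) (f g : Curve) : Prop :=
  ∃ C ∈ 𝒞, ∃ jf : ℤ, Embeds f C jf ∧ ∃ D ∈ 𝒞, ∃ jg : ℤ, Embeds g D jg ∧
    SegsOfAt g D jg = {p : Curve × ℤ | p.1 ∈ 𝒞 ∧ Δ p ∈ SegsOfAt f C jf}

/-- `𝓖 = Δ⁻¹(𝓕)` for sets of curves sitting inside `𝒞`. -/
def IsInvImageSet (𝒞 : Set Curve) (Δ : Curve × ℤ → Curve × ℤ) (𝓕 𝓖 : Set Curve) : Prop :=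
  (∀ f ∈ 𝓕, ∃ g ∈ 𝓖, IsInvImageCurve 𝒞 Δ f g) ∧
  (∀ g ∈ 𝓖, ∃ f ∈ 𝓕, IsInvImageCurve 𝒞 Δ f g)

/-! ### Local isomorphism for bi-infinite sequences -/

/-- A bi-infinite sequence satisfies the local isomorphism property if each of its
finite subwords occurs in all of its sufficiently long subwords. -/
def SeqLIP (b : ℤ → ℤ) : Prop :=
  ∀ k : ℤ, ∀ l : ℕ, ∃ r : ℕ, ∀ k' : ℤ, ∃ j : ℤ, k' ≤ j ∧ j + l ≤ k' + r ∧
    ∀ i : ℕ, i < l → b (j + (i : ℕ)) = b (k + (i : ℕ))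

/-- Two bi-infinite sequences are locally isomorphic if every finite subword of
each one occurs in the other. -/
def SeqLocallyIsomorphic (b c : ℤ → ℤ) : Prop :=
  (∀ k : ℤ, ∀ l : ℕ, ∃ j : ℤ, ∀ i : ℕ, i < l → c (j + (i : ℕ)) = b (k + (i : ℕ))) ∧
  (∀ k : ℤ, ∀ l : ℕ, ∃ j : ℤ, ∀ i : ℕ, i < l → b (j + (i : ℕ)) = c (k + (i : ℕ)))

/-!
A complete `S`-folding curve `C` and a curve associated to `S^{∗∞}` with the same turns on a
window of indices coincide there up to a rotation and a translation, and the rotated and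
translated curve is again associated to `S^{∗∞}`. Every window of the turn sequence of `C` occurs
in `S^{∗∞}`, so two segments of `C` with the same support would give two such segments on a curve
associated to `S^{∗∞}`, against 1). For 2), a square covered by a curve associated to `S^{∗∞}` is
covered by an initial piece of it. The blocks of length `(|S| + 1) ^ n - 1` of `S^{∗∞}` alternate
between its initial block and the reversed negated one, so a long enough window of `C` contains a
copy of that initial piece.
-/

lemma rot_sub (x y : Pt) : rot (x - y) = rot x - rot y := by
  simp only [rot, Prod.fst_sub, Prod.snd_sub, Prod.mk_sub_mk, neg_sub, sub_neg_eq_add]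
  ring_nf

lemma rot_iterate_sub (n : ℕ) (x y : Pt) : rot^[n] (x - y) = rot^[n] x - rot^[n] y := by
  induction n generalizing x y with
  | zero => rfl
  | succ n ih => simp only [Function.iterate_succ_apply, rot_sub, ih]

lemma rotBy_rot (a : ℤ) (w : Pt) : rotBy a (rot w) = rot (rotBy a w) := by
  unfold rotBy; split_ifs <;> simp [rot, rotInv]

lemma rotBy_eq_rot_or_rotInv (a : ℤ) (w : Pt) : rotBy a w = rot w ∨ rotBy a w = rotInv w := by
  unfold rotBy; split_ifs <;> simp

lemma IsUnitVec.rot {v : Pt} (hv : IsUnitVec v) : IsUnitVec (rot v) := by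
  rcases hv with rfl | rfl | rfl | rfl <;> simp [Paperfolding.rot, IsUnitVec]

lemma IsUnitVec.rotInv {v : Pt} (hv : IsUnitVec v) : IsUnitVec (rotInv v) := by
  rcases hv with rfl | rfl | rfl | rfl <;> simp [Paperfolding.rotInv, IsUnitVec]

lemma IsUnitVec.rotBy (a : ℤ) {v : Pt} (hv : IsUnitVec v) : IsUnitVec (rotBy a v) := by
  rcases rotBy_eq_rot_or_rotInv a v with h | h <;> rw [h]
  exacts [hv.rot, hv.rotInv]

lemma exists_rot_iterate_eq {d e : Pt} (hd : IsUnitVec d) (he : IsUnitVec e) :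
    ∃ n : Fin 4, rot^[n] d = e := by
  rcases hd with rfl | rfl | rfl | rfl <;> rcases he with rfl | rfl | rfl | rfl <;>
    first
    | exact ⟨0, by decide⟩ | exact ⟨1, by decide⟩ | exact ⟨2, by decide⟩ | exact ⟨3, by decide⟩

def turnDir (f : ℤ → ℤ) : ℕ → Pt
  | 0 => (1, 0)
  | t + 1 => rotBy (f t) (turnDir f t)

def turnPath (f : ℤ → ℤ) : ℕ → Pt
  | 0 => 0
  | t + 1 => turnPath f t + turnDir f t

lemma isUnitVec_turnDir (f : ℤ → ℤ) (t : ℕ) : IsUnitVec (turnDir f t) := by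
  induction t with
  | zero => exact Or.inl rfl
  | succ t ih => exact ih.rotBy _

lemma turnPath_toNat_add_one_sub {f : ℤ → ℤ} {k : ℤ} (hk : 0 ≤ k) :
    turnPath f (k + 1).toNat - turnPath f k.toNat = turnDir f k.toNat := by
  lift k to ℕ using hk
  simp [turnPath]

lemma turnPath_toNat_turn {f : ℤ → ℤ} {k : ℤ} (hk : 0 ≤ k) :
    turnPath f (k + 2).toNat - turnPath f (k + 1).toNat =
      rotBy (f k) (turnPath f (k + 1).toNat - turnPath f k.toNat) := by
  lift k to ℕ using hk
  rw [show ((k : ℤ) + 2).toNat = k + 2 by omega, show ((k : ℤ) + 1).toNat = k + 1 by omega]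
  simp [turnPath, turnDir]

namespace Curve

def rotate (C : Curve) : Curve where
  dom := C.dom
  isInterval := C.isInterval
  nontrivial := C.nontrivial
  vertex k := rot (C.vertex k)
  step k h₀ h₁ := by simpa only [← rot_sub] using (C.step k h₀ h₁).rot
  turn k h₀ h₂ := by
    simp only [← rot_sub]
    rcases C.turn k h₀ h₂ with h | h <;> rw [h]
    · exact Or.inl rfl
    · exact Or.inr (by simp [rot, rotInv])

@[simp]
lemma rotate_iterate_dom (C : Curve) (n : ℕ) : (rotate^[n] C).dom = C.dom := by
  induction n with
  | zero => rfl
  | succ n ih => rw [Function.iterate_succ_apply', ← ih]; rfl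

@[simp]
lemma rotate_iterate_vertex (C : Curve) (n : ℕ) (k : ℤ) :
    (rotate^[n] C).vertex k = rot^[n] (C.vertex k) := by
  induction n with
  | zero => rfl
  | succ n ih => rw [Function.iterate_succ_apply', Function.iterate_succ_apply', ← ih]; rfl

lemma AssocSeq.rotate {C : Curve} {b : ℤ → ℤ} (h : C.AssocSeq b) : C.rotate.AssocSeq b :=
  fun k h₀ h₂ => by simp only [Curve.rotate, ← rot_sub, h k h₀ h₂, rotBy_rot]

lemma AssocSeq.rotate_iterate {C : Curve} {b : ℤ → ℤ} (h : C.AssocSeq b) (n : ℕ) :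
    (Curve.rotate^[n] C).AssocSeq b := by
  induction n with
  | zero => exact h
  | succ n ih => rw [Function.iterate_succ_apply']; exact ih.rotate

lemma AssocSeq.translate {C : Curve} {b : ℤ → ℤ} (h : C.AssocSeq b) (v : Pt) :
    (C.translate v).AssocSeq b :=
  fun k h₀ h₂ => by simpa [Curve.translate] using h k h₀ h₂

def ofTurns (f : ℤ → ℤ) : Curve where
  dom := Set.Ici 1
  isInterval _ _ _ ha _ hab _ := le_trans ha hab
  nontrivial := ⟨1, by simp⟩
  vertex k := turnPath f k.toNat
  step k hk _ := by
    rw [turnPath_toNat_add_one_sub (by simp at hk; omega)]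
    exact isUnitVec_turnDir f _
  turn k hk _ := by
    rw [turnPath_toNat_turn (by simp at hk; omega)]
    exact rotBy_eq_rot_or_rotInv _ _

lemma ofTurns_assocSeq (f : ℤ → ℤ) : (ofTurns f).AssocSeq f :=
  fun _ hk _ => turnPath_toNat_turn (by simp only [ofTurns, Set.mem_Ici] at hk; omega)

lemma vertex_eq_of_assocSeq {C D : Curve} {b f : ℤ → ℤ} (hC : C.AssocSeq b)
    (hD : D.AssocSeq f) {p a : ℤ} {R : ℕ} (hCdom : ∀ t : ℕ, t ≤ R + 1 → p + t ∈ C.dom)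
    (hDdom : ∀ t : ℕ, t ≤ R + 1 → a + t ∈ D.dom) (h₀ : C.vertex p = D.vertex a)
    (h₁ : C.vertex (p + 1) = D.vertex (a + 1))
    (hturn : ∀ t : ℕ, t < R → b (p + t) = f (a + t)) :
    ∀ t : ℕ, t ≤ R + 1 → C.vertex (p + t) = D.vertex (a + t) := by
  have key : ∀ t : ℕ, t ≤ R →
      C.vertex (p + t) = D.vertex (a + t) ∧ C.vertex (p + t + 1) = D.vertex (a + t + 1) := by
    intro t ht
    induction t with
    | zero => simpa using ⟨h₀, h₁⟩
    | succ t ih =>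
      obtain ⟨e₀, e₁⟩ := ih (by omega)
      have hC' := hC (p + t) (hCdom t (by omega))
        (by simpa [add_assoc] using hCdom (t + 2) (by omega))
      have hD' := hD (a + t) (hDdom t (by omega))
        (by simpa [add_assoc] using hDdom (t + 2) (by omega))
      push_cast
      refine ⟨by rw [← add_assoc, e₁, ← add_assoc], ?_⟩
      rw [show p + ((t : ℤ) + 1) + 1 = p + t + 2 by ring,
        show a + ((t : ℤ) + 1) + 1 = a + t + 2 by ring, ← sub_add_cancel (C.vertex (p + t + 2)),
        hC', e₀, e₁, hturn t (by omega), ← hD', sub_add_cancel]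
  intro t ht
  rcases Nat.lt_or_ge t (R + 1) with h | h
  · exact (key t (by omega)).1
  · obtain rfl : t = R + 1 := by omega
    simpa [add_assoc] using (key R le_rfl).2

lemma exists_rotate_translate_eq {C D : Curve} {b f : ℤ → ℤ} (hC : C.IsComplete)
    (hCb : C.AssocSeq b) (hDf : D.AssocSeq f) {p a : ℤ} {R : ℕ}
    (hdom : ∀ t : ℕ, t ≤ R + 1 → a + t ∈ D.dom)
    (hturn : ∀ t : ℕ, t < R → b (p + t) = f (a + t)) :
    ∃ (n : Fin 4) (v : Pt), ∀ t : ℕ, t ≤ R + 1 →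
      C.vertex (p + t) = ((rotate^[n] D).translate v).vertex (a + t) := by
  obtain ⟨n, hn⟩ := exists_rot_iterate_eq (D.step a (by simpa using hdom 0 (by omega))
    (by simpa using hdom 1 (by omega))) (C.step p (hC ▸ trivial) (hC ▸ trivial))
  refine ⟨n, C.vertex p - rot^[n] (D.vertex a), vertex_eq_of_assocSeq hCb
    ((hDf.rotate_iterate n).translate _) (fun _ _ => hC ▸ trivial)
    (by simpa [Curve.translate] using hdom) (by simp [Curve.translate]) ?_ hturn⟩
  rw [rot_iterate_sub] at hn
  simp only [Curve.translate, rotate_iterate_vertex]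
  linear_combination -hn

end Curve

lemma SameSeg.symm {C D : Curve} {k l : ℤ} (h : SameSeg C k D l) : SameSeg D l C k := by
  rcases h with ⟨h₀, h₁⟩ | ⟨h₀, h₁⟩
  exacts [Or.inl ⟨h₀.symm, h₁.symm⟩, Or.inr ⟨h₁.symm, h₀.symm⟩]

lemma _root_.List.IsPrefix.getD_eq {α : Type*} {l₁ l₂ : List α} (h : l₁ <+: l₂) {i : ℕ}
    (hi : i < l₁.length) (d : α) : l₁.getD i d = l₂.getD i d := by
  rw [List.getD_eq_getElem _ _ hi, List.getD_eq_getElem _ _ (hi.trans_le h.length_le),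
    h.getElem]

lemma foldConv_getD (X T : List ℤ) {i : ℕ} (hi₀ : 1 ≤ i) (hi : i ≤ (foldConv X T).length) :
    (foldConv X T).getD (i - 1) 0 = convEntry X T i := by
  rw [List.getD_eq_getElem _ _ (by omega)]
  simp only [foldConv, List.getElem_ofFn]
  congr 1
  omega

lemma prefix_foldConv (X T : List ℤ) : X <+: foldConv X T := by
  have hlen : X.length ≤ (foldConv X T).length := by
    simp only [foldConv, List.length_ofFn]
    have := Nat.le_mul_of_pos_right (X.length + 1) (Nat.succ_pos T.length)
    simp only [Nat.succ_eq_add_one] at this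
    omega
  refine List.prefix_iff_getElem.2 ⟨hlen, fun i hi => ?_⟩
  have h := foldConv_getD X T (i := i + 1) (by omega) (by omega)
  rw [Nat.add_sub_cancel, List.getD_eq_getElem _ _ (by omega)] at h
  rw [h, convEntry, Nat.mod_eq_of_lt (by omega), Nat.div_eq_of_lt (by omega)]
  simp [hi]

lemma even_mul_add_iff {m q r : ℕ} (hr : r < m) :
    Even (m * q + r) ↔ if Even q then Even r else ¬Even (m - 1 - r) := by
  rw [Nat.even_add, Nat.even_mul, show m - 1 - r = m - (r + 1) by omega, Nat.even_sub (by omega),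
    Nat.even_add_one]
  split_ifs <;> tauto

section foldInf

variable (S : List ℤ)

lemma foldIter_length (n : ℕ) : (foldIter S n).length = (S.length + 1) ^ (n + 1) - 1 := by
  induction n with
  | zero => simp [foldIter]
  | succ n ih =>
    have : 1 ≤ (S.length + 1) ^ (n + 1) := Nat.one_le_pow _ _ (by omega)
    rw [foldIter, foldConv, List.length_ofFn, ih, Nat.sub_add_cancel this, ← pow_succ]

lemma foldIter_prefix {n n' : ℕ} (h : n ≤ n') : foldIter S n <+: foldIter S n' := by
  induction n', h using Nat.le_induction with
  | base => exact List.prefix_refl _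
  | succ n' _ ih => exact ih.trans (prefix_foldConv _ _)

lemma foldInf_eq_getD {n i : ℕ} (hi : i - 1 < (foldIter S n).length) :
    foldInf S i = (foldIter S n).getD (i - 1) 0 := by
  rcases le_total i n with h | h
  · have hm : 2 ≤ S.length + 1 := by
      rw [foldIter_length] at hi
      by_contra! h
      simp [show S.length = 0 by omega] at hi
    refine (foldIter_prefix S h).getD_eq ?_ 0
    rw [foldIter_length]
    have := Nat.lt_pow_self (n := i + 1) hm
    omega
  · exact ((foldIter_prefix S h).getD_eq hi 0).symm

lemma foldInf_mul_add_of_lt {n k j : ℕ} (hk : k < S.length + 1) (hj₀ : 1 ≤ j)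
    (hj : j < (S.length + 1) ^ (n + 1)) :
    foldInf S ((S.length + 1) ^ (n + 1) * k + j) =
      if Even k then foldInf S j else -foldInf S ((S.length + 1) ^ (n + 1) - j) := by
  set M := (S.length + 1) ^ (n + 1)
  have hX : (foldIter S n).length + 1 = M := by rw [foldIter_length]; omega
  have hlen : (foldConv (foldIter S n) S).length = M * (S.length + 1) - 1 := by
    rw [← foldIter, foldIter_length, pow_succ]
  have hkM : M * k + M ≤ M * (S.length + 1) := by
    rw [← mul_add_one]; exact Nat.mul_le_mul_left _ hk
  rw [foldInf_eq_getD S (n := n + 1) (by rw [foldIter, hlen]; omega), foldIter,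
    foldConv_getD _ _ (by omega) (by omega), convEntry]
  simp only [hX, Nat.mul_add_mod, Nat.mod_eq_of_lt hj, Nat.mul_add_div (by omega : 0 < M),
    Nat.div_eq_of_lt hj, add_zero, if_neg (by omega : j ≠ 0), ← Nat.even_iff]
  rw [foldInf_eq_getD S (n := n) (by omega), foldInf_eq_getD S (n := n) (i := M - j) (by omega)]

/-- Block `k` of one level is block `k % m` of block `k / m` of the next level, `m = |S| + 1`;
reversing a run of `m` alternating blocks keeps them alternating, so the orientation of block `k`
is just the parity of `k`. -/
lemma foldInf_mul_add (n k j : ℕ) (hj₀ : 1 ≤ j) (hj : j < (S.length + 1) ^ (n + 1)) :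
    foldInf S ((S.length + 1) ^ (n + 1) * k + j) =
      if Even k then foldInf S j else -foldInf S ((S.length + 1) ^ (n + 1) - j) := by
  induction k using Nat.strong_induction_on generalizing n j with
  | _ k ih =>
  set m := S.length + 1
  rcases Nat.lt_or_ge k m with hk | hk
  · exact foldInf_mul_add_of_lt S hk hj₀ hj
  set M := m ^ (n + 1) with hM
  have hM₁ : m ^ (n + 1 + 1) = M * m := pow_succ _ _
  obtain ⟨q, r, hr, rfl⟩ : ∃ q r, r < m ∧ k = m * q + r :=
    ⟨k / m, k % m, Nat.mod_lt _ (by omega), (Nat.div_add_mod k m).symm⟩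
  have hm₂ : 2 ≤ m := by
    by_contra! h
    simp [hM, show m = 1 by omega] at hj
    omega
  have hq : q < m * q + r := by
    have : 2 * q ≤ m * q := Nat.mul_le_mul_right q hm₂
    omega
  have hMr : M * r + M ≤ M * m := by rw [← mul_add_one]; exact Nat.mul_le_mul_left _ hr
  have hsplit : M * (m - 1 - r) + M * r + M = M * m := by
    rw [← mul_add, ← mul_add_one]; congr 1; omega
  have hfwd : foldInf S (M * r + j) = if Even r then foldInf S j else -foldInf S (M - j) :=
    foldInf_mul_add_of_lt S hr hj₀ hj
  have hbwd : foldInf S (M * (m - 1 - r) + (M - j)) =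
      if Even (m - 1 - r) then foldInf S (M - j) else -foldInf S j := by
    have hMj : M - j < M := by omega
    rw [foldInf_mul_add_of_lt S (by omega : m - 1 - r < m) (by omega) hMj,
      show M - (M - j) = j by omega]
  rw [show M * (m * q + r) + j = m ^ (n + 1 + 1) * q + (M * r + j) by rw [hM₁]; ring,
    ih q hq (n + 1) _ (by omega) (by rw [hM₁]; omega), hfwd,
    show m ^ (n + 1 + 1) - (M * r + j) = M * (m - 1 - r) + (M - j) by rw [hM₁]; omega, hbwd]
  simp only [even_mul_add_iff hr]
  split_ifs <;> simp

end foldInf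

lemma IsCompleteSFoldingSeq.exists_initial_block {S : List ℤ} {b : ℤ → ℤ}
    (hb : IsCompleteSFoldingSeq S b) (n : ℕ) :
    ∃ p : ℤ, ∀ t : ℕ, t < (S.length + 1) ^ (n + 1) - 1 → b (p + t) = foldInf S (1 + t) := by
  set M := (S.length + 1) ^ (n + 1)
  have hM₀ : 0 < M := by positivity
  obtain ⟨j, -, hw⟩ := hb 0 (3 * M)
  -- an even-index block starting less than `2 * M` positions after `j`
  obtain ⟨q, hq, hjq⟩ : ∃ q, M * (2 * (j / (2 * M) + 1)) = q + 2 * M ∧ q ≤ j ∧ j < q + 2 * M := by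
    refine ⟨2 * M * (j / (2 * M)), by ring, ?_⟩
    have := Nat.div_add_mod j (2 * M)
    have := Nat.mod_lt j (by omega : 0 < 2 * M)
    omega
  refine ⟨(q + 2 * M + 1 - j : ℕ), fun t ht => ?_⟩
  have hpos := hw (q + 2 * M + 1 - j + t) (by omega)
  rw [zero_add, Nat.cast_add] at hpos
  rw [hpos, show j + (q + 2 * M + 1 - j + t) = M * (2 * (j / (2 * M) + 1)) + (1 + t) by omega,
    foldInf_mul_add S n _ _ (by omega) (by omega), if_pos (even_two_mul _)]

lemma exists_isInfSCurve (S : List ℤ) : ∃ C, IsInfSCurve S C :=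
  ⟨Curve.ofTurns _, rfl, Curve.ofTurns_assocSeq _⟩

lemma IsInfSCurve.rotate_iterate {S : List ℤ} {D : Curve} (hD : IsInfSCurve S D) (n : ℕ) :
    IsInfSCurve S (Curve.rotate^[n] D) :=
  ⟨by simp [hD.1], hD.2.rotate_iterate n⟩

lemma IsInfSCurve.translate {S : List ℤ} {D : Curve} (hD : IsInfSCurve S D) (v : Pt) :
    IsInfSCurve S (D.translate v) :=
  ⟨hD.1, hD.2.translate v⟩

lemma IsInfSCurve.exists_rotate_translate_eq {S : List ℤ} {C D : Curve} {b : ℤ → ℤ}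
    (hD : IsInfSCurve S D) (hC : C.IsComplete) (hCb : C.AssocSeq b) {p : ℤ} {a R : ℕ}
    (ha : 1 ≤ a) (hturn : ∀ t : ℕ, t < R → b (p + t) = foldInf S (a + t)) :
    ∃ (n : Fin 4) (v : Pt), ∀ t : ℕ, t ≤ R + 1 →
      C.vertex (p + t) = ((Curve.rotate^[n] D).translate v).vertex (a + t) :=
  Curve.exists_rotate_translate_eq hC hCb hD.2 (fun t _ => by rw [hD.1, Set.mem_Ici]; omega)
    fun t ht => by rw [hturn t ht]; congr 1

lemma IsCompleteSFoldingCurve.selfAvoiding {S : List ℤ} {C : Curve} (h1 : Prop1 S)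
    (hC : IsCompleteSFoldingCurve S C) : C.SelfAvoiding := by
  obtain ⟨hcomp, b, hCb, hb⟩ := hC
  obtain ⟨D, hD⟩ := exists_isInfSCurve S
  intro k l hk hl hsame
  by_contra hkl
  wlog hlt : k < l generalizing k l
  · exact this l k hl hk hsame.symm (Ne.symm hkl) (by omega)
  obtain ⟨L, rfl⟩ : ∃ L : ℕ, l = k + L := ⟨(l - k).toNat, by omega⟩
  obtain ⟨j, hj, hw⟩ := hb k L
  obtain ⟨n, v, heq⟩ := hD.exists_rotate_translate_eq hcomp hCb hj hw
  set E := (Curve.rotate^[n] D).translate v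
  have hE : IsInfSCurve S E := (hD.rotate_iterate n).translate v
  have h₀ : C.vertex k = E.vertex j := by simpa using heq 0 (by omega)
  have h₁ : C.vertex (k + 1) = E.vertex (j + 1) := by simpa using heq 1 (by omega)
  have h₂ : C.vertex (k + L + 1) = E.vertex (j + L + 1) := by
    simpa [add_assoc] using heq (L + 1) le_rfl
  rw [SameSeg, h₀, h₁, heq L (by omega), h₂] at hsame
  have hseg : ∀ i : ℤ, 1 ≤ i → E.HasSeg i := fun i hi => by
    rw [Curve.HasSeg, hE.1]; exact ⟨Set.mem_Ici.2 hi, Set.mem_Ici.2 (by omega)⟩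
  have := h1 E hE j (j + L) (hseg j (by omega)) (hseg (j + L) (by omega)) hsame
  omega

def CoversSquareBefore (C : Curve) (z : Pt) (m N : ℕ) : Prop :=
  ∀ a e : Pt, (e = (1, 0) ∨ e = (0, 1)) →
    z.1 ≤ a.1 → a.1 + e.1 ≤ z.1 + m → z.2 ≤ a.2 → a.2 + e.2 ≤ z.2 + m →
    ∃ k : ℤ, k ≤ N ∧ C.HasSeg k ∧
      ((C.vertex k = a ∧ C.vertex (k + 1) = a + e) ∨ (C.vertex k = a + e ∧ C.vertex (k + 1) = a))

lemma CoversSquare.eventually_coversSquareBefore {C : Curve} {z : Pt} {m : ℕ}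
    (h : CoversSquare C z m) : ∀ᶠ N in Filter.atTop, CoversSquareBefore C z m N := by
  set T : Set (Pt × Pt) := {q | (q.2 = (1, 0) ∨ q.2 = (0, 1)) ∧ z.1 ≤ q.1.1 ∧
    q.1.1 + q.2.1 ≤ z.1 + m ∧ z.2 ≤ q.1.2 ∧ q.1.2 + q.2.2 ≤ z.2 + m}
  have hT : T.Finite := by
    refine (((Set.finite_Icc z.1 (z.1 + m)).prod (Set.finite_Icc z.2 (z.2 + m))).prod
      (Set.toFinite {(1, 0), (0, 1)})).subset ?_
    rintro ⟨a, e⟩ ⟨he, h₁, h₂, h₃, h₄⟩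
    refine ⟨⟨⟨h₁, ?_⟩, h₃, ?_⟩, he⟩ <;> rcases he with rfl | rfl <;> dsimp only at * <;> omega
  have hseg : ∀ q ∈ T, ∀ᶠ N : ℕ in Filter.atTop, ∃ k : ℤ, k ≤ N ∧ C.HasSeg k ∧
      ((C.vertex k = q.1 ∧ C.vertex (k + 1) = q.1 + q.2) ∨
        (C.vertex k = q.1 + q.2 ∧ C.vertex (k + 1) = q.1)) := by
    rintro ⟨a, e⟩ ⟨he, h₁, h₂, h₃, h₄⟩
    obtain ⟨k, hk, hends⟩ := h a e he h₁ h₂ h₃ h₄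
    filter_upwards [Filter.eventually_ge_atTop k.toNat] with N hN
    exact ⟨k, by omega, hk, hends⟩
  filter_upwards [(Filter.eventually_all_finite hT).2 hseg] with N hN a e he h₁ h₂ h₃ h₄
  exact hN (a, e) ⟨he, h₁, h₂, h₃, h₄⟩

lemma CoversSquareBefore.translate {C : Curve} {z : Pt} {m N : ℕ}
    (h : CoversSquareBefore C z m N) (v : Pt) :
    CoversSquareBefore (C.translate v) (z + v) m N := by
  intro a e he h₁ h₂ h₃ h₄
  simp only [Prod.fst_add, Prod.snd_add] at h₁ h₂ h₃ h₄
  obtain ⟨k, hkN, hk, hends⟩ := h (a - v) e he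
    (by simp only [Prod.fst_sub]; omega) (by simp only [Prod.fst_sub]; omega)
    (by simp only [Prod.snd_sub]; omega) (by simp only [Prod.snd_sub]; omega)
  refine ⟨k, hkN, hk, ?_⟩
  simp only [Curve.translate]
  rcases hends with ⟨h₅, h₆⟩ | ⟨h₅, h₆⟩
  · left; rw [h₅, h₆]; constructor <;> abel
  · right; rw [h₅, h₆]; constructor <;> abel

lemma CoversSquareBefore.coversSquare {C E : Curve} {z : Pt} {m N : ℕ} {p : ℤ}
    (h : CoversSquareBefore E z m N) (hC : C.IsComplete) (hE : E.dom = Set.Ici 1)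
    (heq : ∀ t : ℕ, t ≤ N → C.vertex (p + t) = E.vertex (1 + t)) : CoversSquare C z m := by
  intro a e he h₁ h₂ h₃ h₄
  obtain ⟨k, hkN, ⟨hk, -⟩, hends⟩ := h a e he h₁ h₂ h₃ h₄
  rw [hE, Set.mem_Ici] at hk
  obtain ⟨t, rfl⟩ : ∃ t : ℕ, k = 1 + t := ⟨(k - 1).toNat, by omega⟩
  have e₁ : C.vertex (p + t + 1) = E.vertex (1 + t + 1) := by
    simpa [add_assoc] using heq (t + 1) (by omega)
  refine ⟨p + t, ⟨hC ▸ trivial, hC ▸ trivial⟩, ?_⟩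
  rwa [heq t (by omega), e₁]

lemma IsCompleteSFoldingCurve.coversArbLargeSquares {S : List ℤ} {C : Curve} (hne : S ≠ [])
    (h2 : Prop2 S) (hC : IsCompleteSFoldingCurve S C) : CoversArbLargeSquares C := by
  obtain ⟨hcomp, b, hCb, hb⟩ := hC
  obtain ⟨D, hD⟩ := exists_isInfSCurve S
  intro m hm
  -- the window of `C` found below matches a rotation of `D` not known in advance, so the bound
  -- on the indices must hold for all four
  obtain ⟨N, hN⟩ : ∃ N : ℕ, ∀ n : Fin 4, ∃ z, CoversSquareBefore (Curve.rotate^[n] D) z m N := by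
    refine (Filter.eventually_all.2 fun n => ?_).exists (f := (Filter.atTop : Filter ℕ))
    obtain ⟨z, hz⟩ := h2 _ (hD.rotate_iterate n) m hm
    exact hz.eventually_coversSquareBefore.mono fun N hN => ⟨z, hN⟩
  have hNM : N + 1 < (S.length + 1) ^ (N + 1) :=
    Nat.lt_pow_self (by have := List.length_pos_iff.2 hne; omega)
  obtain ⟨p, hp⟩ := hb.exists_initial_block N
  obtain ⟨n, v, heq⟩ := hD.exists_rotate_translate_eq hcomp hCb le_rfl hp
  obtain ⟨z, hz⟩ := hN n
  exact ⟨z + v, (hz.translate v).coversSquare hcomp ((hD.rotate_iterate n).translate v).1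
    fun t ht => heq t (by omega)⟩

theorem sfolding_selfavoiding_general (S : List ℤ) (hne : S ≠ [])
    (h1 : Prop1 S) (h2 : Prop2 S) :
    ∀ C : Curve, IsCompleteSFoldingCurve S C →
      C.SelfAvoiding ∧ CoversArbLargeSquares C :=
  fun _ hC => ⟨hC.selfAvoiding h1, hC.coversArbLargeSquares hne h2⟩

/-- If the folding string `S` satisfies properties 1) and 2), then every complete
`S`-folding curve is self-avoiding and covers arbitrarily large squares. -/
theorem sfolding_selfavoiding (S : List ℤ) (hS : IsFoldingString S) (hne : S ≠ [])
    (h1 : Prop1 S) (h2 : Prop2 S) :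
    ∀ C : Curve, IsCompleteSFoldingCurve S C →
      C.SelfAvoiding ∧ CoversArbLargeSquares C :=
  sfolding_selfavoiding_general S hne h1 h2

end Paperfolding
end

section
/- Let S be a folding string. Then: (i) the bi-infinite sequences (σ(S^{∗∞}), +1, S^{∗∞}) and (σ(S^{∗∞}), −1, S^{∗∞}) are complete S-folding sequences; (ii) every complete S-folding sequence satisfies the local isomorphism property; (iii) any two complete S-folding sequences are locally isomorphic. -/
/- Common framework for paperfolding curves, coverings of the plane by such
curves, and the local isomorphism property, following F. Oger,
"The number of paperfolding curves in a covering of the plane". -/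

namespace Paperfolding

/-! Write `m = |S| + 1` and `a = S^{∗∞}`. A fixed point `F` of `U ↦ S ∗ U` satisfies
`F (q m^n) = F q` and, by induction on `n`, for `0 < j < m^n`, `F (k m^n + j) = F j` if `k` is
even and `-F (m^n - j)` if `k` is odd. For `k < m` these identities say that `F` is
`S^{∗n} ∗ S = S^{∗(n+1)}` on `(0, m^(n+1))`, so `a = F`. Hence, for an even `k₀` with
`a k₀ = ε`, the word `a` around `k₀ m^n` is `(σ(a), ε, a)` on `(-m^n, m^n)`, which gives (i);
and every word of `a` inside `(0, m^n)` recurs in every block `2t m^n + (0, m^n)`, so `a` is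
uniformly recurrent, which gives (ii) and (iii). -/

/-- `R ∗ f` for an infinite sequence `f` (1-based, so `f 0` is never read for `0 < i`). -/
def foldConvSeq (R : List ℤ) (f : ℕ → ℤ) (i : ℕ) : ℤ :=
  if i % (R.length + 1) = 0 then f (i / (R.length + 1))
  else if i / (R.length + 1) % 2 = 0 then R.getD (i % (R.length + 1) - 1) 0
  else -R.getD (R.length + 1 - i % (R.length + 1) - 1) 0

/-- A list as a 1-based sequence, `0` outside `1, …, |T|`. -/
def listSeq (T : List ℤ) (q : ℕ) : ℤ := T.getD (q - 1) 0

theorem listSeq_mem {T : List ℤ} {s : ℕ} (hs : 0 < s) (hsT : s < T.length + 1) :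
    listSeq T s ∈ T := by
  rw [listSeq, List.getD_eq_getElem _ _ (by omega)]
  exact List.getElem_mem _

theorem convEntry_eq_foldConvSeq (R T : List ℤ) (i : ℕ) :
    convEntry R T i = foldConvSeq R (listSeq T) i := rfl

theorem foldConvSeq_mul (R : List ℤ) (f : ℕ → ℤ) (q : ℕ) :
    foldConvSeq R f (q * (R.length + 1)) = f q := by
  simp [foldConvSeq]

theorem foldConvSeq_mul_add (R : List ℤ) (f : ℕ → ℤ) {q r : ℕ} (hr : 0 < r)
    (hrR : r < R.length + 1) :
    foldConvSeq R f (q * (R.length + 1) + r) =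
      if Even q then listSeq R r else -listSeq R (R.length + 1 - r) := by
  have hmod : (q * (R.length + 1) + r) % (R.length + 1) = r := by
    rw [Nat.mul_add_mod_self_right, Nat.mod_eq_of_lt hrR]
  have hdiv : (q * (R.length + 1) + r) / (R.length + 1) = q := by
    rw [add_comm, Nat.add_mul_div_right _ _ (by omega), Nat.div_eq_of_lt hrR, zero_add]
  simp only [foldConvSeq, hmod, hdiv, Nat.even_iff, listSeq, if_neg hr.ne']

theorem foldConvSeq_congr (R : List ℤ) {f g : ℕ → ℤ} (hfg : ∀ q, 0 < q → f q = g q) {i : ℕ}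
    (hi : 0 < i) : foldConvSeq R f i = foldConvSeq R g i := by
  unfold foldConvSeq
  split_ifs with h
  · exact hfg _ (Nat.div_pos (Nat.le_of_dvd hi (Nat.dvd_of_mod_eq_zero h)) (by omega))
  all_goals rfl

theorem listSeq_foldConv {R T : List ℤ} {i : ℕ} (hi : 0 < i)
    (hiR : i < (R.length + 1) * (T.length + 1)) : listSeq (foldConv R T) i = convEntry R T i := by
  have hlen : i - 1 < (foldConv R T).length := by simp [foldConv]; omega
  rw [listSeq, List.getD_eq_getElem _ _ hlen]
  simp only [foldConv, List.getElem_ofFn, Nat.sub_add_cancel hi]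

theorem length_foldIter (S : List ℤ) (n : ℕ) :
    (foldIter S n).length = (S.length + 1) ^ (n + 1) - 1 := by
  induction n with
  | zero => simp [foldIter]
  | succ n ih =>
    rw [foldIter, foldConv, List.length_ofFn, ih,
      Nat.sub_add_cancel (Nat.one_le_pow _ _ (by omega)), ← pow_succ]

def IsFoldFixed (R : List ℤ) (f : ℕ → ℤ) : Prop :=
  ∀ i, 0 < i → f i = foldConvSeq R f i

def UniformlyRecurrent (f : ℕ → ℤ) : Prop :=
  ∀ j₀ l : ℕ, 0 < j₀ → ∃ r : ℕ, ∀ p : ℕ, ∃ q, p ≤ q ∧ q + l ≤ p + r ∧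
    ∀ i < l, f (q + i) = f (j₀ + i)

namespace IsFoldFixed

variable {R : List ℤ} {f : ℕ → ℤ}

theorem apply_mul (hf : IsFoldFixed R f) {q : ℕ} (hq : 0 < q) :
    f (q * (R.length + 1)) = f q := by
  rw [hf _ (by positivity), foldConvSeq_mul]

theorem apply_mul_pow (hf : IsFoldFixed R f) {q : ℕ} (hq : 0 < q) (n : ℕ) :
    f (q * (R.length + 1) ^ n) = f q := by
  induction n with
  | zero => simp
  | succ n ih => rw [pow_succ, ← mul_assoc, hf.apply_mul (by positivity), ih]

theorem apply_mul_add (hf : IsFoldFixed R f) {q r : ℕ} (hr : 0 < r) (hrR : r < R.length + 1) :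
    f (q * (R.length + 1) + r) =
      if Even q then listSeq R r else -listSeq R (R.length + 1 - r) := by
  rw [hf _ (by omega), foldConvSeq_mul_add R f hr hrR]

theorem apply_of_lt (hf : IsFoldFixed R f) {r : ℕ} (hr : 0 < r) (hrR : r < R.length + 1) :
    f r = listSeq R r := by
  simpa using hf.apply_mul_add (q := 0) hr hrR

theorem apply_block (hf : IsFoldFixed R f) (k : ℕ) {n j : ℕ} (hj : 0 < j)
    (hjn : j < (R.length + 1) ^ n) :
    f (k * (R.length + 1) ^ n + j) =
      if Even k then f j else -f ((R.length + 1) ^ n - j) := by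
  set M := R.length + 1 with hM
  induction n generalizing j with
  | zero => simp at hjn; omega
  | succ n ih =>
    obtain ⟨q, r, hr, rfl⟩ : ∃ q r, r < M ∧ j = q * M + r :=
      ⟨j / M, j % M, Nat.mod_lt _ (by omega), by rw [mul_comm, Nat.div_add_mod]⟩
    have hqn : q < M ^ n := by
      rw [pow_succ] at hjn; nlinarith
    have hsplit : k * M ^ (n + 1) + (q * M + r) = (k * M ^ n + q) * M + r := by ring
    rcases Nat.eq_zero_or_pos r with rfl | hr0
    · have hq : 0 < q := by
        rcases Nat.eq_zero_or_pos q with rfl | h <;> simp_all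
      have hcompl : M ^ (n + 1) - q * M = (M ^ n - q) * M := by
        rw [pow_succ, Nat.sub_mul]
      rw [hsplit, add_zero, add_zero, hcompl, hf.apply_mul (by positivity), hf.apply_mul hq,
        hf.apply_mul (by omega), ih hq hqn]
    · have hcompl : M ^ (n + 1) - (q * M + r) = (M ^ n - q - 1) * M + (M - r) := by
        have : (M ^ n - q - 1) * M + (M - r) + (q * M + r) = M ^ n * M := by
          zify [hqn, hr.le, Nat.sub_pos_of_lt hqn]
          ring
        rw [pow_succ]; omega
      rw [hsplit, hcompl, hf.apply_mul_add hr0 hr, hf.apply_mul_add hr0 hr,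
        hf.apply_mul_add (by omega) (by omega), Nat.sub_sub_self hr.le]
      rcases Nat.even_or_odd k with hk | hk
      · have : Even (k * M ^ n + q) ↔ Even q := by simp [Nat.even_add, hk.mul_right]
        simp only [this, if_pos hk]
      · have hsum : (k * M ^ n + q) + (M ^ n - q - 1) + 1 = (k + 1) * M ^ n := by
          zify [hqn, Nat.sub_pos_of_lt hqn]
          ring
        have hpar : Even (k * M ^ n + q) ↔ ¬Even (M ^ n - q - 1) := by
          have := (hk.add_one).mul_right (M ^ n)
          rw [← hsum, Nat.even_add_one, Nat.even_add] at this
          tauto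
        simp only [hpar, if_neg (Nat.not_even_iff_odd.mpr hk)]
        split_ifs <;> simp [hM]

theorem apply_eq_one_or_neg_one (hf : IsFoldFixed R f) (hR : IsFoldingString R) (hne : R ≠ [])
    {i : ℕ} (hi : 0 < i) : f i = 1 ∨ f i = -1 := by
  have hM : 1 < R.length + 1 := Nat.succ_lt_succ (List.length_pos_iff.mpr hne)
  induction i using Nat.strong_induction_on with
  | _ i ih =>
    obtain ⟨q, r, hr, rfl⟩ : ∃ q r, r < R.length + 1 ∧ i = q * (R.length + 1) + r :=
      ⟨i / _, i % _, Nat.mod_lt _ (by omega), by rw [mul_comm, Nat.div_add_mod]⟩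
    rcases Nat.eq_zero_or_pos r with rfl | hr0
    · have hq : 0 < q := by rcases Nat.eq_zero_or_pos q with rfl | h <;> simp_all
      rw [add_zero, hf.apply_mul hq]
      exact ih q (by nlinarith) hq
    · rw [hf.apply_mul_add hr0 hr]
      split_ifs
      · exact hR _ (listSeq_mem hr0 hr)
      · rcases hR _ (listSeq_mem (s := R.length + 1 - r) (by omega) (by omega)) with h | h <;>
          simp [h]

theorem exists_even_apply_eq (hf : IsFoldFixed R f) (hR : IsFoldingString R) (hne : R ≠ [])
    {ε : ℤ} (hε : ε = 1 ∨ ε = -1) : ∃ k₀, Even k₀ ∧ 0 < k₀ ∧ f k₀ = ε := by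
  have hM : 1 < R.length + 1 := Nat.succ_lt_succ (List.length_pos_iff.mpr hne)
  set N := (R.length + 1) ^ 2
  have hN : 4 ≤ N := by simp only [N]; nlinarith
  obtain ⟨j, hj, hjN, hplus, hminus⟩ :
      ∃ j, 0 < j ∧ j < N ∧ Even (N + j) ∧ Even (N - j) := by
    rcases Nat.even_or_odd N with h | h
    · exact ⟨2, by omega, by omega, h.add even_two, (Nat.even_sub (by omega)).2 (by simp [h])⟩
    · exact ⟨1, by omega, by omega, h.add_one, (Nat.even_sub (by omega)).2 (by simp [h])⟩
  have hflip : f (N + j) = -f (N - j) := by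
    simpa using hf.apply_block 1 hj hjN
  rcases hf.apply_eq_one_or_neg_one hR hne (i := N - j) (by omega) with h | h <;>
    rcases hε with rfl | rfl
  exacts [⟨N - j, hminus, by omega, h⟩, ⟨N + j, hplus, by omega, by rw [hflip, h]⟩,
    ⟨N + j, hplus, by omega, by rw [hflip, h, neg_neg]⟩, ⟨N - j, hminus, by omega, h⟩]

theorem twoSided_eq (hf : IsFoldFixed R f) {k₀ : ℕ} (hk₀ : Even k₀) (hk₀pos : 0 < k₀) {n : ℕ}
    {t : ℤ} (ht : t.natAbs < (R.length + 1) ^ n) :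
    twoSided f (f k₀) t = f (((k₀ * (R.length + 1) ^ n : ℕ) : ℤ) + t).toNat := by
  obtain ⟨P, hP⟩ : ∃ P, k₀ * (R.length + 1) ^ n = P := ⟨_, rfl⟩
  have hPN : P = (k₀ - 1) * (R.length + 1) ^ n + (R.length + 1) ^ n := by
    rw [← hP, ← Nat.succ_mul, Nat.succ_eq_add_one, Nat.sub_add_cancel hk₀pos]
  rw [hP]
  unfold twoSided
  rcases lt_trichotomy t 0 with ht0 | rfl | ht0
  · have hodd : ¬Even (k₀ - 1) := by
      rw [Nat.even_sub hk₀pos]; simp [hk₀]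
    rw [if_neg (by omega), if_neg (by omega),
      show ((P : ℤ) + t).toNat = (k₀ - 1) * (R.length + 1) ^ n + ((R.length + 1) ^ n - (-t).toNat)
        by omega, hf.apply_block _ (by omega) (by omega), if_neg hodd, Nat.sub_sub_self (by omega)]
  · rw [if_neg (lt_irrefl 0), if_pos rfl, add_zero, Int.toNat_natCast, ← hP,
      hf.apply_mul_pow hk₀pos]
  · rw [if_pos ht0, show ((P : ℤ) + t).toNat = k₀ * (R.length + 1) ^ n + t.toNat by omega,
      hf.apply_block _ (by omega) (by omega), if_pos hk₀]

theorem exists_twoSided_window (hf : IsFoldFixed R f) (hne : R ≠ []) {k₀ : ℕ} (hk₀ : Even k₀)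
    (hk₀pos : 0 < k₀) (k : ℤ) (l : ℕ) :
    ∃ j : ℕ, 0 < j ∧ ∀ i < l, twoSided f (f k₀) (k + i) = f (j + i) := by
  have hM : 1 < R.length + 1 := Nat.succ_lt_succ (List.length_pos_iff.mpr hne)
  set n := k.natAbs + l
  set N := (R.length + 1) ^ n
  have hn : n < N := Nat.lt_pow_self hM
  have hk₀N : N ≤ k₀ * N := Nat.le_mul_of_pos_left N hk₀pos
  refine ⟨(((k₀ * N : ℕ) : ℤ) + k).toNat, by omega, fun i hi => ?_⟩
  rw [hf.twoSided_eq (n := n) hk₀ hk₀pos (by omega)]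
  congr 1
  generalize k₀ * N = P at *
  omega

/-- A window inside `(0, N)`, `N = (|R| + 1)^n`, recurs in every block `2tN + (0, N)`. -/
theorem uniformlyRecurrent (hf : IsFoldFixed R f) (hne : R ≠ []) : UniformlyRecurrent f := by
  intro j₀ l hj₀
  have hM : 1 < R.length + 1 := Nat.succ_lt_succ (List.length_pos_iff.mpr hne)
  set N := (R.length + 1) ^ (j₀ + l)
  have hN : j₀ + l < N := Nat.lt_pow_self hM
  refine ⟨3 * N, fun p => ?_⟩
  have hdiv := Nat.div_add_mod p (2 * N)
  have hmod := Nat.mod_lt p (show 0 < 2 * N by omega)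
  have hexp : 2 * (p / (2 * N) + 1) * N = 2 * N * (p / (2 * N)) + 2 * N := by ring
  refine ⟨2 * (p / (2 * N) + 1) * N + j₀, by omega, by omega, fun i hi => ?_⟩
  rw [add_assoc, hf.apply_block _ (by omega) (by omega), if_pos (by simp)]

theorem listSeq_foldIter (hf : IsFoldFixed R f) (n : ℕ) {i : ℕ} (hi : 0 < i)
    (hin : i < (R.length + 1) ^ (n + 1)) : listSeq (foldIter R n) i = f i := by
  induction n generalizing i with
  | zero => exact (hf.apply_of_lt hi (by simpa using hin)).symm
  | succ n ih =>
    set T := foldIter R n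
    have hT : T.length + 1 = (R.length + 1) ^ (n + 1) := by
      rw [length_foldIter]; exact Nat.sub_add_cancel (Nat.one_le_pow _ _ (by omega))
    obtain ⟨K, j, hj, rfl⟩ : ∃ K j, j < T.length + 1 ∧ i = K * (T.length + 1) + j :=
      ⟨i / _, i % _, Nat.mod_lt _ (by omega), by rw [mul_comm, Nat.div_add_mod]⟩
    have hK : K < R.length + 1 := by
      rw [hT, pow_succ _ (n + 1)] at hin; nlinarith
    rw [show foldIter R (n + 1) = foldConv T R from rfl,
      listSeq_foldConv (by omega) (by nlinarith), convEntry_eq_foldConvSeq]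
    rcases Nat.eq_zero_or_pos j with rfl | hj0
    · have hK0 : 0 < K := by rcases Nat.eq_zero_or_pos K with rfl | h <;> simp_all
      rw [add_zero, foldConvSeq_mul, hT, hf.apply_mul_pow hK0, hf.apply_of_lt hK0 hK]
    · rw [foldConvSeq_mul_add T _ hj0 hj, ih hj0 (hT ▸ hj), ih (by omega) (by omega), hT,
        hf.apply_block _ hj0 (hT ▸ hj)]

end IsFoldFixed

/-- The guard `i / (|S| + 1) < i` fails only for `i = 0` or `S = []`; it makes the recursion
well founded. -/
def foldFix (S : List ℤ) (i : ℕ) : ℤ :=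
  if h : i % (S.length + 1) = 0 ∧ i / (S.length + 1) < i then foldFix S (i / (S.length + 1))
  else foldConvSeq S (fun _ => 0) i
termination_by i

theorem isFoldFixed_foldFix {S : List ℤ} (hne : S ≠ []) : IsFoldFixed S (foldFix S) := by
  intro i hi
  rw [foldFix]
  split_ifs with h
  · rw [foldConvSeq, if_pos h.1]
  · have hmod : i % (S.length + 1) ≠ 0 := fun h0 =>
      h ⟨h0, Nat.div_lt_self hi (Nat.succ_lt_succ (List.length_pos_iff.mpr hne))⟩
    simp only [foldConvSeq, if_neg hmod]

theorem isFoldFixed_foldInf {S : List ℤ} (hne : S ≠ []) : IsFoldFixed S (foldInf S) := by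
  have hM : 1 < S.length + 1 := Nat.succ_lt_succ (List.length_pos_iff.mpr hne)
  have hf := isFoldFixed_foldFix hne
  have heq : ∀ i, 0 < i → foldInf S i = foldFix S i := fun i hi =>
    hf.listSeq_foldIter i hi ((Nat.lt_pow_self hM).trans (Nat.pow_lt_pow_right hM i.lt_succ_self))
  intro i hi
  rw [heq i hi, hf i hi, foldConvSeq_congr S (fun q hq => (heq q hq).symm) hi]

theorem isCompleteSFoldingSeq_twoSided {S : List ℤ} (hS : IsFoldingString S) (hne : S ≠ [])
    {ε : ℤ} (hε : ε = 1 ∨ ε = -1) : IsCompleteSFoldingSeq S (twoSided (foldInf S) ε) := by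
  have hf := isFoldFixed_foldInf hne
  obtain ⟨k₀, hk₀, hk₀pos, rfl⟩ := hf.exists_even_apply_eq hS hne hε
  exact hf.exists_twoSided_window hne hk₀ hk₀pos

namespace IsCompleteSFoldingSeq

variable {S : List ℤ} {b c : ℤ → ℤ}

theorem exists_window_near (hb : IsCompleteSFoldingSeq S b) (hc : IsCompleteSFoldingSeq S c)
    (hrec : UniformlyRecurrent (foldInf S)) (k : ℤ) (l : ℕ) :
    ∃ r : ℕ, ∀ k' : ℤ, ∃ j : ℤ, k' ≤ j ∧ j + l ≤ k' + r ∧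
      ∀ i < l, c (j + i) = b (k + i) := by
  obtain ⟨j₀, hj₀, hb₀⟩ := hb k l
  obtain ⟨r, hr⟩ := hrec j₀ l hj₀
  refine ⟨r, fun k' => ?_⟩
  obtain ⟨j₁, -, hc₁⟩ := hc k' r
  obtain ⟨q, hjq, hqr, hq⟩ := hr j₁
  refine ⟨k' + (q - j₁ : ℕ), by omega, by omega, fun i hi => ?_⟩
  rw [add_assoc, ← Nat.cast_add, hc₁ _ (by omega), ← Nat.add_assoc, Nat.add_sub_cancel' hjq,
    hq i hi, hb₀ i hi]

theorem seqLIP (hb : IsCompleteSFoldingSeq S b) (hrec : UniformlyRecurrent (foldInf S)) :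
    SeqLIP b :=
  fun k l => hb.exists_window_near hb hrec k l

theorem seqLocallyIsomorphic (hb : IsCompleteSFoldingSeq S b) (hc : IsCompleteSFoldingSeq S c)
    (hrec : UniformlyRecurrent (foldInf S)) : SeqLocallyIsomorphic b c := by
  refine ⟨fun k l => ?_, fun k l => ?_⟩
  · obtain ⟨r, hr⟩ := hb.exists_window_near hc hrec k l
    obtain ⟨j, -, -, hj⟩ := hr 0
    exact ⟨j, hj⟩
  · obtain ⟨r, hr⟩ := hc.exists_window_near hb hrec k l
    obtain ⟨j, -, -, hj⟩ := hr 0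
    exact ⟨j, hj⟩

end IsCompleteSFoldingSeq

/-- (i) `(σ(S^{∗∞}), ±1, S^{∗∞})` are complete `S`-folding sequences; (ii) every
complete `S`-folding sequence satisfies the local isomorphism property; (iii) any
two complete `S`-folding sequences are locally isomorphic. -/
theorem sfolding_sequences (S : List ℤ) (hS : IsFoldingString S) (hne : S ≠ []) :
    (IsCompleteSFoldingSeq S (twoSided (foldInf S) 1) ∧
      IsCompleteSFoldingSeq S (twoSided (foldInf S) (-1))) ∧
    (∀ b : ℤ → ℤ, IsCompleteSFoldingSeq S b → SeqLIP b) ∧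
    (∀ b c : ℤ → ℤ, IsCompleteSFoldingSeq S b → IsCompleteSFoldingSeq S c →
      SeqLocallyIsomorphic b c) := by
  have hrec := (isFoldFixed_foldInf hne).uniformlyRecurrent hne
  exact ⟨⟨isCompleteSFoldingSeq_twoSided hS hne (.inl rfl),
      isCompleteSFoldingSeq_twoSided hS hne (.inr rfl)⟩,
    fun b hb => hb.seqLIP hrec, fun b c hb hc => hb.seqLocallyIsomorphic hc hrec⟩

end Paperfolding
end
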